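/- arXiv:2206.01032 — 2 statements merged into one kernel-verified Lean document; each statement's English description precedes it below -/
import Mathlib

section
/- (Equivalence theorem.) Let (S, τ) be a sequential abstract-state system over a language L with only function symbols, and assume additionally that for every state X ∈ S and every finite subset F of U there is an isomorphism from X onto some state X' ∈ S whose carrier is disjoint from F, and that Δ(X) is T-accessible for every original bounded-exploration witness T closed under subterms and every X ∈ S. Then (S, τ) has a finite new bounded-exploration witness if and only if it has a finite original bounded-exploration witness. -/
/-- A first-order language with only function symbols:
`Func n` is the set of `n`-ary function symbols. -/
structure Lang where
  Func : ℕ → Type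

/-- Closed terms of the language `L`. -/
inductive CTerm (L : Lang) : Type
  | app : ∀ {n : ℕ}, L.Func n → (Fin n → CTerm L) → CTerm L

/-- `CTerm.Subterm s t` means `s` is a subterm of `t`. -/
inductive CTerm.Subterm {L : Lang} : CTerm L → CTerm L → Prop
  | refl (t : CTerm L) : CTerm.Subterm t t
  | app {n : ℕ} (f : L.Func n) (ts : Fin n → CTerm L) (i : Fin n) {s : CTerm L} :
      CTerm.Subterm s (ts i) → CTerm.Subterm s (CTerm.app f ts)

/-- A set of closed terms is closed under subterms. -/
def SubtermClosed {L : Lang} (T : Set (CTerm L)) : Prop :=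
  ∀ s t : CTerm L, CTerm.Subterm s t → t ∈ T → s ∈ T

/-- A state: an `L`-structure whose carrier is a subset of `U`.
Function symbols are interpreted as operations mapping carrier elements
to carrier elements. -/
structure State (L : Lang) (U : Type*) where
  carrier : Set U
  interp : ∀ {n : ℕ}, L.Func n → (Fin n → U) → U
  interp_mem : ∀ {n : ℕ} (f : L.Func n) (x : Fin n → U),
    (∀ i, x i ∈ carrier) → interp f x ∈ carrier

/-- The value `V_X(t)` of a closed term `t` in the state `X`. -/
def State.val {L : Lang} {U : Type*} (X : State L U) : CTerm L → U
  | .app f ts => X.interp f (fun i => X.val (ts i))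

/-- `ξ` is an isomorphism from state `X` onto state `Y`. -/
def IsIso {L : Lang} {U : Type*} (ξ : U → U) (X Y : State L U) : Prop :=
  Set.BijOn ξ X.carrier Y.carrier ∧
  ∀ {n : ℕ} (f : L.Func n) (x : Fin n → U), (∀ i, x i ∈ X.carrier) →
    ξ (X.interp f x) = Y.interp f (fun i => ξ (x i))

/-- A sequential abstract-state system `(S, τ)`. -/
structure ASM (L : Lang) (U : Type*) where
  S : Set (State L U)
  nonempty : S.Nonempty
  τ : State L U → State L U
  mapsTo : ∀ X ∈ S, τ X ∈ S
  carrier_τ : ∀ X ∈ S, (τ X).carrier = X.carrier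
  closedIso : ∀ X ∈ S, ∀ (Y : State L U) (ξ : U → U), IsIso ξ X Y → Y ∈ S
  isoτ : ∀ X ∈ S, ∀ Y ∈ S, ∀ ξ : U → U, IsIso ξ X Y → IsIso ξ (τ X) (τ Y)

/-- An update `(f, (x_1, …, x_j), x_0)`. -/
structure Update (L : Lang) (U : Type*) where
  arity : ℕ
  f : L.Func arity
  args : Fin arity → U
  val : U

/-- `u` is an update of the state `X` (in the system `A`): all its components are
in the carrier of `X` and the interpretation of `u.f` in `τ(X)` maps `u.args` to `u.val`. -/
def IsUpd {L : Lang} {U : Type*} (A : ASM L U) (X : State L U) (u : Update L U) : Prop :=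
  (∀ i, u.args i ∈ X.carrier) ∧ u.val ∈ X.carrier ∧ (A.τ X).interp u.f u.args = u.val

/-- `Δ A X` : the set of nontrivial updates of `X`. -/
def Δ {L : Lang} {U : Type*} (A : ASM L U) (X : State L U) : Set (Update L U) :=
  {u | IsUpd A X u ∧ X.interp u.f u.args ≠ u.val}

/-- States `X` and `Y` coincide over the set `T` of closed terms. -/
def Coincide {L : Lang} {U : Type*} (T : Set (CTerm L)) (X Y : State L U) : Prop :=
  ∀ t ∈ T, X.val t = Y.val t

/-- States `X` and `Y` are `T`-similar. -/
def TSimilar {L : Lang} {U : Type*} (T : Set (CTerm L)) (X Y : State L U) : Prop :=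
  ∀ s ∈ T, ∀ t ∈ T, (X.val s = X.val t ↔ Y.val s = Y.val t)

/-- `σ` is (an extension of) the similarity function from `V_X(T)` to `V_Y(T)`:
`σ(V_X(t)) = V_Y(t)` for all `t ∈ T`. -/
def SimFun {L : Lang} {U : Type*} (T : Set (CTerm L)) (X Y : State L U) (σ : U → U) : Prop :=
  ∀ t ∈ T, σ (X.val t) = Y.val t

/-- An element `x` of `X` is `T`-accessible. -/
def AccElem {L : Lang} {U : Type*} (T : Set (CTerm L)) (X : State L U) (x : U) : Prop :=
  ∃ t ∈ T, X.val t = x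

/-- An update is `T`-accessible if all its element components are `T`-accessible. -/
def AccUpd {L : Lang} {U : Type*} (T : Set (CTerm L)) (X : State L U) (u : Update L U) : Prop :=
  AccElem T X u.val ∧ ∀ i, AccElem T X (u.args i)

/-- A set of updates of `X` is `T`-accessible. -/
def AccSet {L : Lang} {U : Type*} (T : Set (CTerm L)) (X : State L U)
    (D : Set (Update L U)) : Prop :=
  ∀ u ∈ D, AccUpd T X u

/-- The action of a function `σ` on an update:
`σ(f, (x_1, …, x_j), x_0) = (f, (σx_1, …, σx_j), σx_0)`. -/
def Update.map {L : Lang} {U : Type*} (σ : U → U) (u : Update L U) : Update L U :=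
  ⟨u.arity, u.f, fun i => σ (u.args i), σ u.val⟩

/-- `T` is an original bounded-exploration witness for `A`. -/
def OrigWitness {L : Lang} {U : Type*} (A : ASM L U) (T : Set (CTerm L)) : Prop :=
  ∀ X ∈ A.S, ∀ Y ∈ A.S, Coincide T X Y → Δ A X = Δ A Y

/-- `T` is a new bounded-exploration witness for `A`. -/
def NewWitness {L : Lang} {U : Type*} (A : ASM L U) (T : Set (CTerm L)) : Prop :=
  SubtermClosed T ∧
  (∀ X ∈ A.S, AccSet T X (Δ A X)) ∧
  (∀ X ∈ A.S, ∀ Y ∈ A.S, TSimilar T X Y → ∀ σ : U → U, SimFun T X Y σ →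
    ∀ u : Update L U, IsUpd A X u → AccUpd T X u →
      (u ∈ Δ A X ↔ Update.map σ u ∈ Δ A Y))

/-!
From an original witness `T` one passes to its (still finite) subterm closure. Given
`T`-similar states `X` and `Y`, first replace `X` by an isomorphic copy `X'` whose carrier
avoids the finitely many values `V_Y(T)`. The map sending `V_{X'}(t)` to `V_Y(t)` and fixing
everything else is then injective on the carrier of `X'`, so transporting `X'` along it gives
a state `Z ∈ S` isomorphic to `X` that coincides with `Y` over `T`. Hence `Δ(Z) = Δ(Y)`, and
the isomorphism `X ≅ Z` agrees with the similarity function on `T`-accessible updates.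
Conversely, states coinciding over `T` are `T`-similar with the identity as similarity function.
-/

section

variable {L : Lang} {U : Type*}

namespace CTerm

theorem Subterm.trans {r s t : CTerm L} (hst : Subterm s t) (htr : Subterm t r) :
    Subterm s r := by
  induction htr with
  | refl => exact hst
  | app f ts i _ ih => exact .app f ts i (ih hst)

theorem finite_setOf_subterm : ∀ t : CTerm L, {s | Subterm s t}.Finite
  | .app f ts => by
    refine ((Set.finite_iUnion fun i => finite_setOf_subterm (ts i)).insert (app f ts)).subset ?_
    intro s hs
    cases hs with
    | refl => exact Set.mem_insert _ _
    | app f ts i h => exact Set.mem_insert_of_mem _ (Set.mem_iUnion.mpr ⟨i, h⟩)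

end CTerm

def subtermClosure (T : Set (CTerm L)) : Set (CTerm L) :=
  ⋃ t ∈ T, {s | CTerm.Subterm s t}

theorem subset_subtermClosure (T : Set (CTerm L)) : T ⊆ subtermClosure T :=
  fun t ht => Set.mem_biUnion ht (.refl t)

theorem subtermClosed_subtermClosure (T : Set (CTerm L)) : SubtermClosed (subtermClosure T) := by
  intro s t hst ht
  obtain ⟨r, hr, htr⟩ := Set.mem_iUnion₂.mp ht
  exact Set.mem_biUnion hr (hst.trans htr)

theorem Set.Finite.subtermClosure {T : Set (CTerm L)} (hT : T.Finite) :
    (_root_.subtermClosure T).Finite :=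
  hT.biUnion fun t _ => CTerm.finite_setOf_subterm t

theorem State.val_mem (X : State L U) : ∀ t : CTerm L, X.val t ∈ X.carrier
  | .app f ts => X.interp_mem f _ fun i => X.val_mem (ts i)

theorem State.exists_isIso_of_injOn (X : State L U) {η : U → U}
    (hη : Set.InjOn η X.carrier) : ∃ Z : State L U, IsIso η X Z := by
  classical
  -- a left inverse of `η` on the carrier; unlike `Function.invFunOn` it needs no `Nonempty U`
  let g : U → U := fun y => if h : ∃ x ∈ X.carrier, η x = y then h.choose else y
  have hg : ∀ x ∈ X.carrier, g (η x) = x := fun x hx => by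
    have h : ∃ x' ∈ X.carrier, η x' = η x := ⟨x, hx, rfl⟩
    simp only [g, dif_pos h]
    exact hη h.choose_spec.1 hx h.choose_spec.2
  have hg_mem : ∀ y ∈ η '' X.carrier, g y ∈ X.carrier := by
    rintro _ ⟨x, hx, rfl⟩
    rw [hg x hx]
    exact hx
  refine ⟨⟨η '' X.carrier, fun f x => η (X.interp f (g ∘ x)),
    fun f x hx => ⟨_, X.interp_mem f _ fun i => hg_mem _ (hx i), rfl⟩⟩,
    ⟨Set.mapsTo_image η _, hη, Set.surjOn_image η _⟩, fun f x hx => ?_⟩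
  change η (X.interp f x) = η (X.interp f (g ∘ η ∘ x))
  congr
  exact funext fun i => (hg (x i) (hx i)).symm

namespace IsIso

variable {ξ η : U → U} {X Y Z : State L U}

theorem val_eq (h : IsIso ξ X Y) : ∀ t : CTerm L, Y.val t = ξ (X.val t)
  | .app f ts => by
    change Y.interp f (fun i => Y.val (ts i)) = ξ (X.interp f fun i => X.val (ts i))
    rw [h.2 f _ fun i => X.val_mem (ts i)]
    exact congrArg _ (funext fun i => h.val_eq (ts i))

theorem comp (hξ : IsIso ξ X Y) (hη : IsIso η Y Z) : IsIso (η ∘ ξ) X Z :=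
  ⟨hη.1.comp hξ.1, fun f x hx => by
    simp only [Function.comp_apply]
    rw [hξ.2 f x hx, hη.2 f _ fun i => hξ.1.mapsTo (hx i)]⟩

theorem mem_Δ_iff (A : ASM L U) (hX : X ∈ A.S) (hY : Y ∈ A.S) (h : IsIso ξ X Y)
    {u : Update L U} (hargs : ∀ i, u.args i ∈ X.carrier) (hval : u.val ∈ X.carrier) :
    u ∈ Δ A X ↔ u.map ξ ∈ Δ A Y := by
  have hinj : Set.InjOn ξ X.carrier := h.1.injOn
  have hargs_τ : ∀ i, u.args i ∈ (A.τ X).carrier := by rwa [A.carrier_τ X hX]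
  have hnext : (A.τ Y).interp u.f (fun i => ξ (u.args i)) = ξ u.val ↔
      (A.τ X).interp u.f u.args = u.val := by
    rw [← (A.isoτ X hX Y hY ξ h).2 u.f u.args hargs_τ]
    exact hinj.eq_iff (A.carrier_τ X hX ▸ (A.τ X).interp_mem u.f u.args hargs_τ) hval
  have hcur : Y.interp u.f (fun i => ξ (u.args i)) = ξ u.val ↔ X.interp u.f u.args = u.val := by
    rw [← h.2 u.f u.args hargs]
    exact hinj.eq_iff (X.interp_mem u.f u.args hargs) hval
  have hargs_Y : ∀ i, ξ (u.args i) ∈ Y.carrier := fun i => h.1.mapsTo (hargs i)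
  simp only [Δ, IsUpd, Update.map, Set.mem_ofPred_eq]
  simp [hnext, hcur, hargs, hval, hargs_Y, h.1.mapsTo hval]

end IsIso

section Similarity

variable {T : Set (CTerm L)} {X X' Y : State L U}

theorem TSimilar.of_coincide (h : Coincide T X Y) : TSimilar T X Y :=
  fun s hs t ht => by rw [h s hs, h t ht]

theorem TSimilar.of_isIso_left {ξ : U → U} (hξ : IsIso ξ X X') (h : TSimilar T X Y) :
    TSimilar T X' Y := fun s hs t ht => by
  rw [hξ.val_eq, hξ.val_eq, hξ.1.injOn.eq_iff (X.val_mem s) (X.val_mem t)]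
  exact h s hs t ht

theorem SimFun.comp_isIso {ξ η : U → U} (hξ : IsIso ξ X X') (hη : SimFun T X' Y η) :
    SimFun T X Y (η ∘ ξ) := fun t ht => by
  rw [Function.comp_apply, ← hξ.val_eq, hη t ht]

theorem SimFun.eq_of_accElem {σ ζ : U → U} (hσ : SimFun T X Y σ) (hζ : SimFun T X Y ζ)
    {x : U} (hx : AccElem T X x) : σ x = ζ x := by
  obtain ⟨t, ht, rfl⟩ := hx
  rw [hσ t ht, hζ t ht]

theorem AccUpd.map_eq {σ ζ : U → U} {u : Update L U} (hu : AccUpd T X u)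
    (hσ : SimFun T X Y σ) (hζ : SimFun T X Y ζ) : u.map σ = u.map ζ := by
  simp only [Update.map, hσ.eq_of_accElem hζ hu.1, hσ.eq_of_accElem hζ (hu.2 _)]

/-- Disjointness from `V_Y(T)` keeps the values outside `V_X(T)`, which are fixed, apart from
the values inside it, which are sent into `V_Y(T)`. -/
theorem TSimilar.exists_injOn_simFun (h : TSimilar T X Y)
    (hdisj : Disjoint X.carrier (Y.val '' T)) :
    ∃ η : U → U, Set.InjOn η X.carrier ∧ SimFun T X Y η := by
  classical
  let η : U → U := fun x => if hx : AccElem T X x then Y.val hx.choose else x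
  have hη_acc : SimFun T X Y η := fun t ht => by
    have hx : AccElem T X (X.val t) := ⟨t, ht, rfl⟩
    simp only [η, dif_pos hx]
    exact (h _ hx.choose_spec.1 t ht).mp hx.choose_spec.2
  have hη_out : ∀ x, ¬AccElem T X x → η x = x := fun x hx => dif_neg hx
  have hmixed : ∀ t ∈ T, ∀ y ∈ X.carrier, ¬AccElem T X y → η (X.val t) ≠ η y :=
    fun t ht y hy hay heq => by
      rw [hη_acc t ht, hη_out y hay] at heq
      exact Set.disjoint_left.mp hdisj hy ⟨t, ht, heq⟩
  refine ⟨η, ?_, hη_acc⟩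
  intro x hx y hy hxy
  by_cases hax : AccElem T X x <;> by_cases hay : AccElem T X y
  · obtain ⟨s, hs, rfl⟩ := hax
    obtain ⟨t, ht, rfl⟩ := hay
    rw [hη_acc s hs, hη_acc t ht] at hxy
    exact (h s hs t ht).mpr hxy
  · obtain ⟨s, hs, rfl⟩ := hax
    exact (hmixed s hs y hy hay hxy).elim
  · obtain ⟨t, ht, rfl⟩ := hay
    exact (hmixed t ht x hx hax hxy.symm).elim
  · rwa [hη_out x hax, hη_out y hay] at hxy

end Similarity

namespace OrigWitness

variable {A : ASM L U} {T : Set (CTerm L)}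

theorem mono {T' : Set (CTerm L)} (hw : OrigWitness A T) (hTT' : T ⊆ T') :
    OrigWitness A T' :=
  fun X hX Y hY h => hw X hX Y hY fun t ht => h t (hTT' ht)

theorem mem_Δ_iff_map_mem_Δ (hw : OrigWitness A T) {X X' Y : State L U} (hX : X ∈ A.S)
    (hY : Y ∈ A.S) (hX' : X' ∈ A.S) {ξ : U → U} (hξ : IsIso ξ X X')
    (hdisj : Disjoint X'.carrier (Y.val '' T)) (hsim : TSimilar T X Y) {σ : U → U}
    (hσ : SimFun T X Y σ) {u : Update L U} (hu : IsUpd A X u) (hacc : AccUpd T X u) :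
    u ∈ Δ A X ↔ u.map σ ∈ Δ A Y := by
  obtain ⟨η, hη_inj, hη⟩ := (hsim.of_isIso_left hξ).exists_injOn_simFun hdisj
  obtain ⟨Z, hηZ⟩ := X'.exists_isIso_of_injOn hη_inj
  have hZ : Z ∈ A.S := A.closedIso X' hX' Z η hηZ
  have hZY : Δ A Z = Δ A Y := hw Z hZ Y hY fun t ht => by rw [hηZ.val_eq, hη t ht]
  rw [hacc.map_eq hσ (hη.comp_isIso hξ), ← hZY]
  exact (hξ.comp hηZ).mem_Δ_iff A hX hZ hu.1 hu.2.1

end OrigWitness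

theorem NewWitness.origWitness {A : ASM L U} {T : Set (CTerm L)} (hw : NewWitness A T) :
    OrigWitness A T := by
  obtain ⟨-, hacc, hsim⟩ := hw
  have hsub : ∀ X ∈ A.S, ∀ Y ∈ A.S, Coincide T X Y → Δ A X ⊆ Δ A Y :=
    fun X hX Y hY h u hu => (hsim X hX Y hY (.of_coincide h) id h u hu.1 (hacc X hX u hu)).1 hu
  exact fun X hX Y hY h =>
    (hsub X hX Y hY h).antisymm (hsub Y hY X hX fun t ht => (h t ht).symm)

end

/-- equivalence theorem: assume that every state has an isomorphic
copy in `S` whose carrier avoids any given finite subset of `U`, and that `Δ(X)`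
is `T`-accessible for every subterm-closed original bounded-exploration witness `T`
and every state `X`.  Then the system has a finite new bounded-exploration witness
if and only if it has a finite original bounded-exploration witness. -/
theorem new_witness_iff_orig_witness
    {L : Lang} {U : Type*} (A : ASM L U)
    (hfresh : ∀ X ∈ A.S, ∀ F : Set U, F.Finite →
      ∃ X' ∈ A.S, (∃ ξ : U → U, IsIso ξ X X') ∧ Disjoint X'.carrier F)
    (hacc : ∀ T : Set (CTerm L), SubtermClosed T → OrigWitness A T →
      ∀ X ∈ A.S, AccSet T X (Δ A X)) :
    (∃ T : Set (CTerm L), T.Finite ∧ NewWitness A T) ↔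
      (∃ T : Set (CTerm L), T.Finite ∧ OrigWitness A T) := by
  constructor
  · rintro ⟨T, hT, hw⟩
    exact ⟨T, hT, hw.origWitness⟩
  · rintro ⟨T, hT, hw⟩
    have hclosed := subtermClosed_subtermClosure T
    have hw' : OrigWitness A (subtermClosure T) := hw.mono (subset_subtermClosure T)
    refine ⟨subtermClosure T, hT.subtermClosure, hclosed, hacc _ hclosed hw', ?_⟩
    intro X hX Y hY hsim σ hσ u hu hu_acc
    obtain ⟨X', hX', ⟨ξ, hξ⟩, hdisj⟩ :=
      hfresh X hX (Y.val '' subtermClosure T) (hT.subtermClosure.image _)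
    exact hw'.mem_Δ_iff_map_mem_Δ hX hY hX' hξ hdisj hsim hσ hu hu_acc
end

section
/- Let (S, τ) be a sequential abstract-state system over a language L with only function symbols, and let ξ be an isomorphism from a state X ∈ S onto a state X' ∈ S. Then ξ maps the update set of X onto the update set of X': Δ(X') = { (f, (ξx_1, …, ξx_j), ξx_0) : (f, (x_1, …, x_j), x_0) ∈ Δ(X) }. -/
/-! By `isoτ`, `ξ` is also an isomorphism `τ X ≅ τ X'`. Injectivity of `ξ` on the carrier then
transports both the equation `τ(X) ⊨ f(x̄) = x₀` and its failure in `X` in either direction, and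
surjectivity shows that every update of `X'` is the image of one of `X`. -/

section

variable {L : Lang} {U : Type*}

theorem IsIso.interp_eq_iff {ξ : U → U} {X Y : State L U} (h : IsIso ξ X Y) {n : ℕ}
    (f : L.Func n) {x : Fin n → U} {v : U} (hx : ∀ i, x i ∈ X.carrier) (hv : v ∈ X.carrier) :
    Y.interp f (fun i => ξ (x i)) = ξ v ↔ X.interp f x = v := by
  rw [← h.2 f x hx]
  exact h.1.injOn.eq_iff (X.interp_mem f x hx) hv

theorem Update.exists_map_eq_of_surjOn {ξ : U → U} {s t : Set U} (h : Set.SurjOn ξ s t)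
    (u' : Update L U) (hargs : ∀ i, u'.args i ∈ t) (hval : u'.val ∈ t) :
    ∃ u : Update L U, (∀ i, u.args i ∈ s) ∧ u.val ∈ s ∧ u.map ξ = u' := by
  choose x hx hξx using fun i => h (hargs i)
  obtain ⟨v, hv, hξv⟩ := h hval
  refine ⟨⟨u'.arity, u'.f, x, v⟩, hx, hv, ?_⟩
  simp only [Update.map, hξv, funext hξx]

theorem Update.map_mem_Δ_iff (A : ASM L U) {X X' : State L U} (hX : X ∈ A.S) (hX' : X' ∈ A.S)
    {ξ : U → U} (hξ : IsIso ξ X X') {u : Update L U} (hargs : ∀ i, u.args i ∈ X.carrier)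
    (hval : u.val ∈ X.carrier) :
    u.map ξ ∈ Δ A X' ↔ u ∈ Δ A X := by
  have hξτ := A.isoτ X hX X' hX' ξ hξ
  have hargsτ : ∀ i, u.args i ∈ (A.τ X).carrier := by rwa [A.carrier_τ X hX]
  have hvalτ : u.val ∈ (A.τ X).carrier := by rwa [A.carrier_τ X hX]
  simp only [Δ, IsUpd, Update.map, Set.mem_ofPred_eq, ne_eq, hξτ.interp_eq_iff u.f hargsτ hvalτ,
    hξ.interp_eq_iff u.f hargs hval, hargs, hval, fun i => hξ.1.mapsTo (hargs i),
    hξ.1.mapsTo hval, implies_true, true_and]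

end

/-- an isomorphism `ξ` from a state `X ∈ S` onto a state `X' ∈ S`
maps the update set of `X` onto the update set of `X'`:
`Δ(X') = ξ(Δ(X))`. -/
theorem iso_maps_update_set
    {L : Lang} {U : Type*} (A : ASM L U) (X X' : State L U)
    (hX : X ∈ A.S) (hX' : X' ∈ A.S) (ξ : U → U) (hξ : IsIso ξ X X') :
    Δ A X' = Update.map ξ '' Δ A X := by
  ext u'
  constructor
  · intro hu'
    obtain ⟨u, hargs, hval, rfl⟩ :=
      Update.exists_map_eq_of_surjOn hξ.1.surjOn u' hu'.1.1 hu'.1.2.1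
    exact ⟨u, (Update.map_mem_Δ_iff A hX hX' hξ hargs hval).1 hu', rfl⟩
  · rintro ⟨u, hu, rfl⟩
    exact (Update.map_mem_Δ_iff A hX hX' hξ hu.1.1 hu.1.2.1).2 hu
end
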